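/- Under the hypotheses of the multiplicative reverse triangle inequality in a Hilbert 𝔄-module (e₁,…,e_m mutually orthogonal with ‖eₖ‖=1, r_k, ρ_k ∈ ℝ with ∑ₖ(r_k²+ρ_k²) ≠ 0, and r_k²‖xⱼ‖ ≤ Re⟨r_k e_k,xⱼ⟩, ρ_k²‖xⱼ‖ ≤ Im⟨ρ_k e_k,xⱼ⟩ for all j,k), equality (∑ₖ(r_k²+ρ_k²))^{1/2} ∑ⱼ‖xⱼ‖ = ‖∑ⱼ xⱼ‖ holds if and only if ∑ⱼ xⱼ = (∑ⱼ‖xⱼ‖) · ∑ₖ (r_k + iρ_k)·eₖ. -/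

import Mathlib

/-!
Put `S = ∑ₖ (r_k² + ρ_k²)`, `t = ∑ⱼ ‖xⱼ‖`, `X = ∑ⱼ xⱼ` and `v = ∑ₖ (r_k + iρ_k) eₖ`.
Adding the hypotheses over `j` and `k` gives `S t ≤ Re⟨v, X⟩`, and orthonormality gives
`‖⟨v, v⟩‖ ≤ S`. Expanding `⟨X - t v, X - t v⟩ = ⟨X, X⟩ - 2t Re⟨v, X⟩ + t²⟨v, v⟩`, the equality
`‖X‖ = √S t` makes the right side `≤ S t² - 2 S t² + S t² = 0`, so `X = t v`. Conversely, if
`X = t v` then `S t ≤ t ‖⟨v, v⟩‖ ≤ S t`, hence `‖X‖² = t² ‖⟨v, v⟩‖ = S t²`.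
-/

open scoped RightActions

/-- Hermitian real part of an element of a complex *-algebra. -/
noncomputable def cre {A : Type*} [Ring A] [StarRing A] [Module ℂ A] (a : A) : A :=
  (2 : ℂ)⁻¹ • (a + star a)

/-- Hermitian imaginary part of an element of a complex *-algebra. -/
noncomputable def cim {A : Type*} [Ring A] [StarRing A] [Module ℂ A] (a : A) : A :=
  (2 * Complex.I)⁻¹ • (a - star a)

/-- The Hilbert C⋆-module class as it stood in the older Mathlib (right action of `A` through
`Aᵐᵒᵖ`, inner product `A`-linear on the right in the second argument). -/
class CStarModuleRight (A E : Type*) [NonUnitalSemiring A] [StarRing A] [Module ℂ A]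
    [AddCommGroup E] [Module ℂ E] [PartialOrder A] [SMul Aᵐᵒᵖ E] [Norm A] [Norm E]
    extends Inner A E where
  inner_add_right {x} {y} {z} : inner x (y + z) = inner x y + inner x z
  inner_self_nonneg {x} : 0 ≤ inner x x
  inner_self {x} : inner x x = 0 ↔ x = 0
  inner_op_smul_right {a : A} {x y : E} : inner x (y <• a) = inner x y * a
  inner_smul_right_complex {z : ℂ} {x} {y} : inner x (z • y) = z • inner x y
  star_inner x y : star (inner x y) = inner y x
  norm_eq_sqrt_norm_inner_self x : ‖x‖ = √‖inner x x‖

open scoped ComplexConjugate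

namespace CStarModuleRight

section Norm

variable (A : Type*) {E : Type*} [NonUnitalNormedRing A] [StarRing A] [Module ℂ A]
  [PartialOrder A] [AddCommGroup E] [Module ℂ E] [SMul Aᵐᵒᵖ E] [Norm E]

lemma norm_nonneg [CStarModuleRight A E] (x : E) : 0 ≤ ‖x‖ := by
  rw [norm_eq_sqrt_norm_inner_self (A := A) x]
  exact Real.sqrt_nonneg _

lemma norm_zero [CStarModuleRight A E] : ‖(0 : E)‖ = 0 := by
  rw [norm_eq_sqrt_norm_inner_self (A := A), inner_self.mpr rfl, _root_.norm_zero, Real.sqrt_zero]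

lemma eq_zero_of_subsingleton [CStarModuleRight A E] [Subsingleton A] (x : E) : x = 0 :=
  inner_self.mp (Subsingleton.elim (inner A x x) 0)

variable {A} in
lemma norm_sq_eq_norm_inner_self [CStarModuleRight A E] (x : E) : ‖x‖ ^ 2 = ‖inner A x x‖ := by
  rw [norm_eq_sqrt_norm_inner_self (A := A) x, Real.sq_sqrt (_root_.norm_nonneg (inner A x x))]

end Norm

section Algebra

variable {A E : Type*} [NonUnitalRing A] [StarRing A] [Module ℂ A] [PartialOrder A] [Norm A]
  [AddCommGroup E] [Module ℂ E] [SMul Aᵐᵒᵖ E] [Norm E] [CStarModuleRight A E]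

variable (A) in
def innerAddMonoidHom (x : E) : E →+ A where
  toFun y := inner A x y
  map_zero' := by simpa using inner_add_right (A := A) (x := x) (y := (0 : E)) (z := 0)
  map_add' _ _ := inner_add_right

lemma inner_sum_right {ι : Type*} (s : Finset ι) (x : E) (f : ι → E) :
    inner A x (∑ i ∈ s, f i) = ∑ i ∈ s, inner A x (f i) :=
  map_sum (innerAddMonoidHom A x) f s

lemma inner_sum_left {ι : Type*} (s : Finset ι) (f : ι → E) (y : E) :
    inner A (∑ i ∈ s, f i) y = ∑ i ∈ s, inner A (f i) y := by
  rw [← star_inner y, inner_sum_right, star_sum]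
  exact Finset.sum_congr rfl fun i _ => star_inner _ _

lemma inner_sub_right (x y z : E) : inner A x (y - z) = inner A x y - inner A x z :=
  map_sub (innerAddMonoidHom A x) y z

lemma inner_sub_left (x y z : E) : inner A (x - y) z = inner A x z - inner A y z := by
  rw [← star_inner z, inner_sub_right, star_sub, star_inner, star_inner]

lemma inner_smul_left_complex [StarModule ℂ A] (z : ℂ) (x y : E) :
    inner A (z • x) y = conj z • inner A x y := by
  rw [← star_inner y, inner_smul_right_complex, star_smul, star_inner, RCLike.star_def]

lemma inner_sum_smul_self_of_orthogonal [StarModule ℂ A] {ι : Type*} [Fintype ι] [DecidableEq ι]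
    (e : ι → E) (horth : ∀ i j, i ≠ j → inner A (e i) (e j) = 0) (c : ι → ℂ) :
    inner A (∑ k, c k • e k) (∑ k, c k • e k) =
      ∑ k, Complex.normSq (c k) • inner A (e k) (e k) := by
  rw [inner_sum_left]
  refine Finset.sum_congr rfl fun i _ => ?_
  rw [inner_sum_right, Finset.sum_eq_single_of_mem i (Finset.mem_univ i) fun j _ hji => by
      rw [inner_smul_left_complex, inner_smul_right_complex, horth i j hji.symm, smul_zero,
        smul_zero],
    inner_smul_left_complex, inner_smul_right_complex, smul_smul, ← Complex.normSq_eq_conj_mul_self,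
    Complex.coe_smul]

end Algebra

end CStarModuleRight

lemma cre_sum {A ι : Type*} [Ring A] [StarRing A] [Module ℂ A] (s : Finset ι) (f : ι → A) :
    cre (∑ i ∈ s, f i) = ∑ i ∈ s, cre (f i) := by
  simp only [cre, star_sum, ← Finset.sum_add_distrib, Finset.smul_sum]

lemma IsSelfAdjoint.cre_eq {A : Type*} [Ring A] [StarRing A] [Module ℂ A] {a : A}
    (ha : IsSelfAdjoint a) : cre a = a := by
  rw [cre, ha.star_eq, ← two_smul ℂ a, smul_smul, inv_mul_cancel₀ two_ne_zero, one_smul]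

namespace CStarModuleRight

variable {A E : Type*} [CStarAlgebra A] [PartialOrder A]
  [AddCommGroup E] [Module ℂ E] [SMul Aᵐᵒᵖ E] [Norm E] [CStarModuleRight A E]

lemma cre_inner_add_mul_I_smul_left (r ρ : ℝ) (e x : E) :
    cre (inner A (((r : ℂ) + ρ * Complex.I) • e) x) =
      cre (inner A ((r : ℂ) • e) x) + cim (inner A ((ρ : ℂ) • e) x) := by
  simp only [cre, cim, inner_smul_left_complex, star_smul, smul_add, smul_sub, smul_smul,
    RCLike.star_def, map_add, map_mul, Complex.conj_ofReal, Complex.conj_I, map_neg,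
    Complex.inv_I, mul_inv]
  module

lemma inner_sub_ofReal_smul_self (x v : E) (t : ℝ) :
    inner A (x - (t : ℂ) • v) (x - (t : ℂ) • v) =
      inner A x x - (2 * t) • cre (inner A v x) + t ^ 2 • inner A v v := by
  simp only [inner_sub_left, inner_sub_right, inner_smul_left_complex, inner_smul_right_complex,
    ← star_inner v x, cre, Complex.conj_ofReal, ← Complex.coe_smul]
  push_cast
  module

lemma norm_inner_sum_smul_self_le {ι : Type*} [Fintype ι] [DecidableEq ι] (e : ι → E)
    (horth : ∀ i j, i ≠ j → inner A (e i) (e j) = 0) (he : ∀ k, ‖e k‖ ≤ 1) (c : ι → ℂ) :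
    ‖inner A (∑ k, c k • e k) (∑ k, c k • e k)‖ ≤ ∑ k, Complex.normSq (c k) := by
  rw [inner_sum_smul_self_of_orthogonal e horth]
  refine (norm_sum_le _ _).trans (Finset.sum_le_sum fun k _ => ?_)
  rw [norm_smul, Real.norm_of_nonneg (Complex.normSq_nonneg _), ← norm_sq_eq_norm_inner_self]
  exact mul_le_of_le_one_right (Complex.normSq_nonneg _)
    (pow_le_one₀ (norm_nonneg A _) (he k))

section Order

variable [StarOrderedRing A]

lemma inner_self_le_norm_sq_smul_one (x : E) : inner A x x ≤ ‖x‖ ^ 2 • (1 : A) := by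
  rw [norm_sq_eq_norm_inner_self (A := A), ← Algebra.algebraMap_eq_smul_one]
  exact IsSelfAdjoint.le_algebraMap_norm_self (star_inner (A := A) x x)

lemma sum_smul_one_le_cre_inner_sum {ι κ : Type*} [Fintype ι] [Fintype κ] (e : ι → E)
    (x : κ → E) (r ρ : ι → ℝ)
    (h₁ : ∀ j k, (r k ^ 2 * ‖x j‖) • (1 : A) ≤ cre (inner A ((r k : ℂ) • e k) (x j)))
    (h₂ : ∀ j k, (ρ k ^ 2 * ‖x j‖) • (1 : A) ≤ cim (inner A ((ρ k : ℂ) • e k) (x j))) :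
    ((∑ k, (r k ^ 2 + ρ k ^ 2)) * ∑ j, ‖x j‖) • (1 : A) ≤
      cre (inner A (∑ k, ((r k : ℂ) + ρ k * Complex.I) • e k) (∑ j, x j)) := by
  rw [inner_sum_left, cre_sum, Finset.sum_mul, Finset.sum_smul]
  refine Finset.sum_le_sum fun k _ => ?_
  rw [inner_sum_right, cre_sum, Finset.mul_sum, Finset.sum_smul]
  refine Finset.sum_le_sum fun j _ => ?_
  rw [cre_inner_add_mul_I_smul_left, add_mul, add_smul]
  exact add_le_add (h₁ j k) (h₂ j k)

section EqualityCase

variable {x v : E} {S t : ℝ}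

lemma eq_ofReal_smul_of_sqrt_mul_eq_norm (ht : 0 ≤ t) (hv : ‖inner A v v‖ ≤ S)
    (hkey : (S * t) • (1 : A) ≤ cre (inner A v x)) (h : √S * t = ‖x‖) : x = (t : ℂ) • v := by
  have hS : 0 ≤ S := (_root_.norm_nonneg _).trans hv
  have hxx : inner A x x ≤ (S * t ^ 2) • (1 : A) := by
    simpa only [← h, mul_pow, Real.sq_sqrt hS] using inner_self_le_norm_sq_smul_one (A := A) x
  have hvv : inner A v v ≤ S • (1 : A) := by
    refine (inner_self_le_norm_sq_smul_one v).trans (smul_le_smul_of_nonneg_right ?_ zero_le_one)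
    rwa [norm_sq_eq_norm_inner_self (A := A)]
  rw [← sub_eq_zero, ← inner_self (A := A)]
  refine le_antisymm ?_ inner_self_nonneg
  calc inner A (x - (t : ℂ) • v) (x - (t : ℂ) • v)
      = inner A x x - (2 * t) • cre (inner A v x) + t ^ 2 • inner A v v :=
        inner_sub_ofReal_smul_self x v t
    _ ≤ (S * t ^ 2) • (1 : A) - (2 * t) • ((S * t) • (1 : A)) + t ^ 2 • (S • (1 : A)) := by
        gcongr
    _ = 0 := by module

lemma sqrt_mul_eq_norm_of_eq_ofReal_smul [Nontrivial A] (ht : 0 ≤ t) (hv : ‖inner A v v‖ ≤ S)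
    (hkey : (S * t) • (1 : A) ≤ cre (inner A v x)) (h : x = (t : ℂ) • v) : √S * t = ‖x‖ := by
  subst h
  have hS : 0 ≤ S := (_root_.norm_nonneg _).trans hv
  have hcre : cre (inner A v ((t : ℂ) • v)) = t • inner A v v := by
    rw [inner_smul_right_complex, Complex.coe_smul]
    exact ((IsSelfAdjoint.all t).smul (star_inner v v)).cre_eq
  have hlower : S * t ≤ t * ‖inner A v v‖ :=
    calc S * t = ‖(S * t) • (1 : A)‖ := by
          rw [norm_smul, norm_one, mul_one, Real.norm_of_nonneg (mul_nonneg hS ht)]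
      _ ≤ ‖t • inner A v v‖ := CStarAlgebra.norm_le_norm_of_nonneg_of_le
          (smul_nonneg (mul_nonneg hS ht) zero_le_one) (hcre ▸ hkey)
      _ = t * ‖inner A v v‖ := by rw [norm_smul, Real.norm_of_nonneg ht]
  have hvv : t * ‖inner A v v‖ = S * t := le_antisymm (by nlinarith) hlower
  have hxx : ‖inner A ((t : ℂ) • v) ((t : ℂ) • v)‖ = S * t ^ 2 := by
    rw [inner_smul_left_complex, inner_smul_right_complex, smul_smul, Complex.conj_ofReal,
      ← Complex.ofReal_mul, Complex.coe_smul, norm_smul, Real.norm_of_nonneg (mul_self_nonneg t)]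
    linear_combination t * hvv
  rw [norm_eq_sqrt_norm_inner_self (A := A), hxx, Real.sqrt_mul hS, Real.sqrt_sq ht]

lemma sqrt_mul_eq_norm_iff_eq_ofReal_smul [Nontrivial A] (ht : 0 ≤ t) (hv : ‖inner A v v‖ ≤ S)
    (hkey : (S * t) • (1 : A) ≤ cre (inner A v x)) : √S * t = ‖x‖ ↔ x = (t : ℂ) • v :=
  ⟨eq_ofReal_smul_of_sqrt_mul_eq_norm ht hv hkey, sqrt_mul_eq_norm_of_eq_ofReal_smul ht hv hkey⟩

end EqualityCase

end Order

end CStarModuleRight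

theorem stmt6_general {A E : Type*} [CStarAlgebra A] [PartialOrder A] [StarOrderedRing A]
    [AddCommGroup E] [Module ℂ E] [SMul Aᵐᵒᵖ E] [Norm E] [CStarModuleRight A E]
    (m n : ℕ) (e : Fin m → E) (x : Fin n → E)
    (horth : ∀ i j, i ≠ j → (inner A (e i) (e j) : A) = 0) (hnorm : ∀ k, ‖e k‖ = 1)
    (r ρ : Fin m → ℝ)
    (h₁ : ∀ j k, (r k ^ 2 * ‖x j‖) • (1 : A) ≤ cre (inner A ((r k : ℂ) • e k) (x j) : A))
    (h₂ : ∀ j k, (ρ k ^ 2 * ‖x j‖) • (1 : A) ≤ cim (inner A ((ρ k : ℂ) • e k) (x j) : A)) :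
    Real.sqrt (∑ k, (r k ^ 2 + ρ k ^ 2)) * ∑ j, ‖x j‖ = ‖∑ j, x j‖ ↔
      ∑ j, x j = ((∑ j, ‖x j‖ : ℝ) : ℂ) • ∑ k, ((r k : ℂ) + (ρ k : ℂ) * Complex.I) • e k := by
  rcases subsingleton_or_nontrivial A with hA | hA
  · have hE : ∀ y : E, y = 0 := CStarModuleRight.eq_zero_of_subsingleton A
    simp [hE (x _), CStarModuleRight.norm_zero A]
  · have hv := CStarModuleRight.norm_inner_sum_smul_self_le e horth (fun k => (hnorm k).le)
      fun k => (r k : ℂ) + ρ k * Complex.I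
    simp only [Complex.normSq_add_mul_I] at hv
    exact CStarModuleRight.sqrt_mul_eq_norm_iff_eq_ofReal_smul
      (Finset.sum_nonneg fun j _ => CStarModuleRight.norm_nonneg A (x j)) hv
      (CStarModuleRight.sum_smul_one_le_cre_inner_sum e x r ρ h₁ h₂)

theorem stmt6 {A E : Type*} [CStarAlgebra A] [PartialOrder A] [StarOrderedRing A]
    [AddCommGroup E] [Module ℂ E] [SMul Aᵐᵒᵖ E] [Norm E] [CStarModuleRight A E]
    (m n : ℕ) (e : Fin m → E) (x : Fin n → E)
    (horth : ∀ i j, i ≠ j → (inner A (e i) (e j) : A) = 0) (hnorm : ∀ k, ‖e k‖ = 1)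
    (r ρ : Fin m → ℝ) (hS : ∑ k, (r k ^ 2 + ρ k ^ 2) ≠ 0)
    (h₁ : ∀ j k, (r k ^ 2 * ‖x j‖) • (1 : A) ≤ cre (inner A ((r k : ℂ) • e k) (x j) : A))
    (h₂ : ∀ j k, (ρ k ^ 2 * ‖x j‖) • (1 : A) ≤ cim (inner A ((ρ k : ℂ) • e k) (x j) : A)) :
    Real.sqrt (∑ k, (r k ^ 2 + ρ k ^ 2)) * ∑ j, ‖x j‖ = ‖∑ j, x j‖ ↔
      ∑ j, x j = ((∑ j, ‖x j‖ : ℝ) : ℂ) • ∑ k, ((r k : ℂ) + (ρ k : ℂ) * Complex.I) • e k :=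
  stmt6_general m n e x horth hnorm r ρ h₁ h₂
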